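/- Let w₁, w₂, w₃ be three affinely independent points of ℝ³ and let T = convexHull{w₁, w₂, w₃} be the triangle they span. Then for every affine map u : ℝ³ → ℝ, ∫_T u dμH[2] = μH[2](T) · (u(w₁) + u(w₂) + u(w₃))/3, where μH[2] is the 2-dimensional Hausdorff measure. This is the three-dimensional instance of Lemma 1 of the paper: integrating a linear finite element function over a triangular face of a tetrahedral cell is exact when the function is replaced by the arithmetic mean of its three nodal values on that face. -/

import Mathlib

/-!
In barycentric coordinates `λᵢ` of a simplex `T`, an affine map is `u = ∑ᵢ u(wᵢ) λᵢ`, so it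
suffices to show `∫_T λᵢ = |T| / (n + 1)`. The affine map permuting two vertices maps `T` onto
itself; as it preserves the positive, finite measure of `T`, its Jacobian is `1`, so all the
`∫_T λᵢ` coincide, and they add up to `|T|` because `∑ᵢ λᵢ = 1`. A simplex with `n + 1`
vertices in a normed space is carried isometrically onto one in its `n`-dimensional direction
space, where `μH[n]` is a Haar measure.
-/

open MeasureTheory Set

namespace AffineBasis

variable {ι k V P V₂ P₂ : Type*} [Fintype ι] [Ring k] [AddCommGroup V] [Module k V]
  [AddTorsor V P] [AddCommGroup V₂] [Module k V₂] [AddTorsor V₂ P₂]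

noncomputable def affineConstr (b : AffineBasis ι k P) (p : ι → P₂) : P →ᵃ[k] P₂ :=
  (Finset.univ.affineCombination k p).comp b.coords

@[simp]
theorem affineConstr_apply_self (b : AffineBasis ι k P) (p : ι → P₂) (i : ι) :
    b.affineConstr p (b i) = p i := by
  classical
  exact Finset.univ.affineCombination_of_eq_one_of_eq_zero _ _ (Finset.mem_univ i)
    (b.coord_apply_eq i) fun j _ hji => b.coord_apply_ne hji

theorem coord_comp_affineConstr_perm (b : AffineBasis ι k P) (π : Equiv.Perm ι) (i : ι) :
    (b.coord i).comp (b.affineConstr (b ∘ π)) = b.coord (π.symm i) := by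
  classical
  refine AffineMap.ext_on b.tot ?_
  rintro - ⟨j, rfl⟩
  simp [coord_apply, Equiv.eq_symm_apply, eq_comm]

theorem affineConstr_perm_injective (b : AffineBasis ι k P) (π : Equiv.Perm ι) :
    Function.Injective (b.affineConstr (b ∘ π)) := by
  have hinv : (b.affineConstr (b ∘ π.symm)).comp (b.affineConstr (b ∘ π)) = AffineMap.id k P := by
    refine AffineMap.ext_on b.tot ?_
    rintro - ⟨j, rfl⟩
    simp
  exact Function.LeftInverse.injective (g := b.affineConstr (b ∘ π.symm)) fun x => by
    simpa using congr($hinv x)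

theorem affineMap_apply_eq_sum (b : AffineBasis ι k P) (g : P →ᵃ[k] V₂) (x : P) :
    g x = ∑ i, b.coord i x • g (b i) := by
  conv_lhs => rw [← b.affineCombination_coord_eq_self x]
  rw [Finset.map_affineCombination _ _ _ (b.sum_coord_apply_eq_one x),
    Finset.affineCombination_eq_linear_combination _ _ _ (b.sum_coord_apply_eq_one x)]
  rfl

theorem image_convexHull_affineConstr_perm {E : Type*} [AddCommGroup E] [Module ℝ E]
    (b : AffineBasis ι ℝ E) (π : Equiv.Perm ι) :
    b.affineConstr (b ∘ π) '' convexHull ℝ (range b) = convexHull ℝ (range b) := by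
  have h : b.affineConstr (b ∘ π) ∘ b = b ∘ π := funext (b.affineConstr_apply_self _)
  rw [AffineMap.image_convexHull, ← range_comp, h, π.surjective.range_comp]

end AffineBasis

section Haar

variable {E : Type*} [NormedAddCommGroup E] [NormedSpace ℝ E] [FiniteDimensional ℝ E]
  [MeasurableSpace E] (μ : Measure E) [μ.IsAddHaarMeasure]

theorem AffineBasis.measureReal_convexHull_ne_zero {ι : Type*} [Fintype ι]
    (b : AffineBasis ι ℝ E) : μ.real (convexHull ℝ (range b)) ≠ 0 := by
  have hpos : 0 < μ (convexHull ℝ (range b)) := μ.measure_pos_of_nonempty_interior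
    (interior_convexHull_nonempty_iff_affineSpan_eq_top.mpr b.tot)
  have hfin : μ (convexHull ℝ (range b)) < ⊤ :=
    ((finite_range b).isCompact_convexHull ℝ).measure_lt_top
  exact (ENNReal.toReal_pos hpos.ne' hfin.ne).ne'

variable [BorelSpace E]

theorem setIntegral_comp_affineMap_of_image_eq {F : Type*} [NormedAddCommGroup F]
    [NormedSpace ℝ F] {σ : E →ᵃ[ℝ] E} {s : Set E} (hs : MeasurableSet s) (hμs : μ.real s ≠ 0)
    (hσ : InjOn σ s) (himage : σ '' s = s) (g : E → F) :
    ∫ x in s, g (σ x) ∂μ = ∫ x in s, g x ∂μ := by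
  set L : E →L[ℝ] E := LinearMap.toContinuousLinearMap σ.linear
  have hσL : ∀ x ∈ s, HasFDerivWithinAt σ L s x := fun x _ => by
    have : HasFDerivAt (fun y => L y + σ 0) L x := L.hasFDerivAt.add_const _
    refine (this.congr_of_eventuallyEq (Filter.Eventually.of_forall fun y => ?_)).hasFDerivWithinAt
    exact congr_fun σ.decomp y
  have hdet : |L.det| = 1 := by
    have hvol := integral_image_eq_integral_abs_det_fderiv_smul μ hs hσL hσ fun _ => (1 : ℝ)
    simp only [himage, setIntegral_const, smul_eq_mul, mul_one] at hvol
    exact (mul_eq_left₀ hμs).mp hvol.symm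
  conv_rhs => rw [← himage, integral_image_eq_integral_abs_det_fderiv_smul μ hs hσL hσ]
  simp [hdet]

namespace AffineBasis

variable {ι : Type*} [Fintype ι] (b : AffineBasis ι ℝ E)

theorem integrableOn_convexHull (g : E →ᵃ[ℝ] ℝ) : IntegrableOn g (convexHull ℝ (range b)) μ :=
  g.continuous_of_finiteDimensional.continuousOn.integrableOn_compact
    ((finite_range b).isCompact_convexHull ℝ)

theorem setIntegral_coord_convexHull (i : ι) :
    ∫ x in convexHull ℝ (range b), b.coord i x ∂μ =
      μ.real (convexHull ℝ (range b)) / Fintype.card ι := by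
  set T := convexHull ℝ (range b)
  have hsymm : ∀ j, ∫ x in T, b.coord j x ∂μ = ∫ x in T, b.coord i x ∂μ := fun j => by
    classical
    rw [← setIntegral_comp_affineMap_of_image_eq μ
      ((finite_range b).isCompact_convexHull ℝ).measurableSet (b.measureReal_convexHull_ne_zero μ)
      (b.affineConstr_perm_injective (Equiv.swap i j)).injOn
      (b.image_convexHull_affineConstr_perm _) (b.coord i)]
    congr with x
    rw [← AffineMap.comp_apply, coord_comp_affineConstr_perm, Equiv.symm_swap,
      Equiv.swap_apply_left]
  have hsum : ∑ j, ∫ x in T, b.coord j x ∂μ = μ.real T := by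
    rw [← integral_finsetSum _ fun j _ => b.integrableOn_convexHull μ (b.coord j)]
    simp [T, b.sum_coord_apply_eq_one]
  simp only [hsymm, Finset.sum_const, Finset.card_univ, nsmul_eq_mul] at hsum
  have := b.nonempty
  rw [← hsum, mul_div_cancel_left₀ _ (Nat.cast_ne_zero.mpr Fintype.card_ne_zero)]

theorem setIntegral_convexHull_affineMap (g : E →ᵃ[ℝ] ℝ) :
    ∫ x in convexHull ℝ (range b), g x ∂μ =
      μ.real (convexHull ℝ (range b)) * ((∑ i, g (b i)) / Fintype.card ι) := by
  have hg : ∀ x, g x = ∑ i, b.coord i x * g (b i) := b.affineMap_apply_eq_sum g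
  rw [integral_congr_ae (Filter.Eventually.of_forall hg),
    integral_finsetSum _ fun i _ => (b.integrableOn_convexHull μ (b.coord i)).mul_const _]
  simp_rw [integral_mul_const, setIntegral_coord_convexHull]
  rw [Finset.sum_div, Finset.mul_sum]
  exact Finset.sum_congr rfl fun i _ => by ring

end AffineBasis

end Haar

theorem Isometry.setIntegral_image_hausdorffMeasure {X Y F : Type*} [MetricSpace X]
    [CompleteSpace X] [MeasurableSpace X] [BorelSpace X] [MetricSpace Y] [MeasurableSpace Y]
    [BorelSpace Y] [NormedAddCommGroup F] [NormedSpace ℝ F] {f : X → Y} (hf : Isometry f)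
    {d : ℝ} (hd : 0 ≤ d) (s : Set X) (g : Y → F) :
    ∫ y in f '' s, g y ∂μH[d] = ∫ x in s, g (f x) ∂μH[d] := by
  rw [← Measure.restrict_restrict_of_subset (image_subset_range f s),
    ← hf.map_hausdorffMeasure (Or.inl hd),
    hf.isClosedEmbedding.measurableEmbedding.setIntegral_map, preimage_image_eq s hf.injective]

theorem AffineIndependent.setIntegral_convexHull_affineMap_hausdorffMeasure {ι E : Type*}
    [Fintype ι] [NormedAddCommGroup E] [NormedSpace ℝ E] [MeasurableSpace E] [BorelSpace E]
    {n : ℕ} {w : ι → E} (hw : AffineIndependent ℝ w) (hcard : Fintype.card ι = n + 1)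
    (u : E →ᵃ[ℝ] ℝ) :
    ∫ x in convexHull ℝ (range w), u x ∂μH[n] =
      μH[n].real (convexHull ℝ (range w)) * ((∑ i, u (w i)) / Fintype.card ι) := by
  obtain ⟨i₀⟩ : Nonempty ι := Fintype.card_pos_iff.mp (by omega)
  set V := vectorSpan ℝ (range w)
  have hrank : Module.finrank ℝ V = n := hw.finrank_vectorSpan hcard
  have : (μH[(n : ℝ)] : Measure V).IsAddHaarMeasure := hrank ▸ isAddHaarMeasure_hausdorffMeasure
  let F : V →ᵃ[ℝ] E := V.subtype.toAffineMap + AffineMap.const ℝ V (w i₀)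
  have hF : Isometry F := (IsometryEquiv.addRight (w i₀)).isometry.comp isometry_subtype_coe
  let q : ι → V := fun i =>
    ⟨w i -ᵥ w i₀, vsub_mem_vectorSpan ℝ (mem_range_self i) (mem_range_self i₀)⟩
  have hFq : F ∘ q = w := funext fun i => by simp [F, q]
  have hq : AffineIndependent ℝ q := AffineIndependent.of_comp F (hFq ▸ hw)
  let b : AffineBasis ι ℝ V :=
    ⟨q, hq, hq.affineSpan_eq_top_iff_card_eq_finrank_add_one.mpr (hrank ▸ hcard)⟩
  have hT : convexHull ℝ (range w) = F '' convexHull ℝ (range b) := by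
    rw [AffineMap.image_convexHull, ← range_comp]
    exact congrArg _ (congrArg _ hFq.symm)
  rw [hT, hF.setIntegral_image_hausdorffMeasure (Nat.cast_nonneg n), measureReal_def,
    hF.hausdorffMeasure_image (Or.inl (Nat.cast_nonneg n)), ← measureReal_def]
  have hbw : ∀ i, F (b i) = w i := congr_fun hFq
  simpa only [AffineMap.comp_apply, hbw] using b.setIntegral_convexHull_affineMap μH[n] (u.comp F)

/-- Lemma 1, 3D instance: the integral of an affine map over a triangle spanned
by three affinely independent points of `ℝ³`, with respect to the 2-dimensional
Hausdorff measure, equals the area of the triangle times the arithmetic mean of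
the three vertex values. -/
theorem integral_affineMap_triangle_eq_area_mul_mean
    (w : Fin 3 → EuclideanSpace ℝ (Fin 3))
    (hw : AffineIndependent ℝ w)
    (u : EuclideanSpace ℝ (Fin 3) →ᵃ[ℝ] ℝ) :
    ∫ x in convexHull ℝ (Set.range w), u x ∂(μH[(2 : ℝ)]) =
      (μH[(2 : ℝ)] (convexHull ℝ (Set.range w))).toReal *
        ((u (w 0) + u (w 1) + u (w 2)) / 3) := by
  simpa [Fin.sum_univ_three, Measure.real] using
    hw.setIntegral_convexHull_affineMap_hausdorffMeasure (n := 2) rfl u
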